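/- arXiv:2303.13737 — 2 statements merged into one kernel-verified Lean document; each statement's English description precedes it below -/
import Mathlib

section
/- Let 𝒮 and 𝒯 be compact subsets of ℝ, let μ be a finite measure on 𝒯 and ν a finite measure on 𝒮, and let K : 𝒯 × 𝒮 → ℝ be continuous with d(s) := ∫_𝒯 |K(t,s)| μ(dt) > 0 for all s ∈ 𝒮; let ρ be the measure on 𝒮 with density dρ/dν = d/Z where Z = ∫_𝒮 d dν. Then for every y ∈ L²_μ(𝒯) there exists a unique φ^y ∈ L²_ρ(𝒮) such that ⟨φ^y, ψ⟩_{L²_ρ} = ⟨L_K ψ, y⟩_{L²_μ} for all ψ ∈ L²_ρ(𝒮), where (L_K ψ)(t) = ∫_𝒮 K(t,s) ψ(s) ν(ds). -/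
/-!
With `w = d / Z` we have `ρ = w ν`, and `w` is bounded below by some `c > 0` (compactness), so
`ν ≤ c⁻¹ ρ` and `L²_ρ ⊂ L¹_ρ ⊂ L¹_ν`. Fubini turns `⟨L_K ψ, y⟩_μ` into `∫ g ψ dν` with
`g s = ∫ K (t, s) y t dμ`, which is `⟨g / w, ψ⟩_ρ`; the bounded function `g / w` is the
representative, and uniqueness is the nondegeneracy of the inner product.
-/

open MeasureTheory
open scoped RealInnerProductSpace

section WithDensity

variable {S : Type*} [MeasurableSpace S] {ν : Measure S} {w : S → ℝ}

theorem le_smul_withDensity_ofReal {δ : ℝ} (hδ : 0 < δ) (hδw : ∀ᵐ s ∂ν, δ ≤ w s) :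
    ν ≤ ENNReal.ofReal δ⁻¹ • ν.withDensity fun s => ENNReal.ofReal (w s) :=
  calc ν = ν.withDensity 1 := withDensity_one.symm
    _ ≤ ν.withDensity (ENNReal.ofReal δ⁻¹ • fun s => ENNReal.ofReal (w s)) := by
      refine withDensity_mono ?_
      filter_upwards [hδw] with s hs
      simp only [Pi.one_apply, Pi.smul_apply, smul_eq_mul]
      rw [← ENNReal.ofReal_mul (inv_nonneg.2 hδ.le), ← ENNReal.ofReal_one]
      exact ENNReal.ofReal_le_ofReal ((one_le_inv_mul₀ hδ).2 hs)
    _ = _ := withDensity_smul' _ _ ENNReal.ofReal_ne_top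

theorem integral_withDensity_ofReal_inv_mul (hw : AEMeasurable w ν) (hpos : ∀ᵐ s ∂ν, 0 < w s)
    (h : S → ℝ) :
    ∫ s, (w s)⁻¹ * h s ∂ν.withDensity (fun s => ENNReal.ofReal (w s)) = ∫ s, h s ∂ν := by
  refine (integral_withDensity_eq_integral_smul₀ hw.real_toNNReal _).trans ?_
  refine integral_congr_ae ?_
  filter_upwards [hpos] with s hs
  rw [NNReal.smul_def, Real.coe_toNNReal _ hs.le, smul_eq_mul, mul_inv_cancel_left₀ hs.ne']

end WithDensity

theorem MeasureTheory.L2.real_inner_toLp_left {S : Type*} [MeasurableSpace S] {ρ : Measure S}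
    {f : S → ℝ} (hf : MemLp f 2 ρ) (g : Lp ℝ 2 ρ) : ⟪hf.toLp f, g⟫ = ∫ s, f s * g s ∂ρ := by
  rw [L2.inner_def]
  refine integral_congr_ae ?_
  filter_upwards [hf.coeFn_toLp] with s hs
  rw [hs, Real.inner_apply]

section KernelOperator

variable {S T : Type*} [MeasurableSpace T] {μ : Measure T} {K : T × S → ℝ} {M : ℝ}

theorem norm_integral_kernel_mul_le (hK : ∀ p, ‖K p‖ ≤ M) {y : T → ℝ} (hy : Integrable y μ)
    (s : S) : ‖∫ t, K (t, s) * y t ∂μ‖ ≤ M * ∫ t, ‖y t‖ ∂μ :=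
  calc ‖∫ t, K (t, s) * y t ∂μ‖ ≤ ∫ t, M * ‖y t‖ ∂μ :=
        norm_integral_le_of_norm_le (hy.norm.const_mul M) (ae_of_all _ fun t => by
          rw [norm_mul]; exact mul_le_mul_of_nonneg_right (hK _) (norm_nonneg _))
    _ = M * ∫ t, ‖y t‖ ∂μ := integral_const_mul M _

variable [MeasurableSpace S] {ν : Measure S}

theorem aestronglyMeasurable_integral_kernel_mul [SFinite μ] [SFinite ν]
    (hKm : AEStronglyMeasurable K (μ.prod ν)) {y : T → ℝ} (hy : AEStronglyMeasurable y μ) :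
    AEStronglyMeasurable (fun s => ∫ t, K (t, s) * y t ∂μ) ν := by
  have : AEStronglyMeasurable (fun p : S × T => K p.swap * y p.2) (ν.prod μ) :=
    hKm.prod_swap.mul hy.comp_snd
  exact this.integral_prod_right'

theorem integral_integral_kernel_mul_comm [SFinite μ] [SFinite ν]
    (hKm : AEStronglyMeasurable K (μ.prod ν)) (hK : ∀ p, ‖K p‖ ≤ M)
    {f : S → ℝ} (hf : Integrable f ν) {y : T → ℝ} (hy : Integrable y μ) :
    ∫ t, (∫ s, K (t, s) * f s ∂ν) * y t ∂μ = ∫ s, (∫ t, K (t, s) * y t ∂μ) * f s ∂ν := by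
  have hprod : Integrable (fun p : T × S => K p * (y p.1 * f p.2)) (μ.prod ν) :=
    (hy.mul_prod hf).bdd_mul hKm (ae_of_all _ hK)
  calc ∫ t, (∫ s, K (t, s) * f s ∂ν) * y t ∂μ
      = ∫ t, ∫ s, K (t, s) * (y t * f s) ∂ν ∂μ := by
        congr 1 with t
        rw [← integral_mul_const]
        congr 1 with s
        ring
    _ = ∫ s, ∫ t, K (t, s) * (y t * f s) ∂μ ∂ν := integral_integral_swap hprod
    _ = ∫ s, (∫ t, K (t, s) * y t ∂μ) * f s ∂ν := by
        congr 1 with s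
        rw [← integral_mul_const]
        congr 1 with t
        ring


theorem exists_unique_inner_eq_integral_kernel_mul [IsFiniteMeasure μ] [IsFiniteMeasure ν]
    (hKm : AEStronglyMeasurable K (μ.prod ν)) (hK : ∀ p, ‖K p‖ ≤ M)
    {w : S → ℝ} (hw : Integrable w ν) {δ : ℝ} (hδ : 0 < δ) (hδw : ∀ᵐ s ∂ν, δ ≤ w s)
    {y : T → ℝ} (hy : Integrable y μ) :
    ∃! φ : Lp ℝ 2 (ν.withDensity fun s => ENNReal.ofReal (w s)),
      ∀ ψ : Lp ℝ 2 (ν.withDensity fun s => ENNReal.ofReal (w s)),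
        ⟪φ, ψ⟫ = ∫ t, (∫ s, K (t, s) * ψ s ∂ν) * y t ∂μ := by
  set ρ := ν.withDensity fun s => ENNReal.ofReal (w s)
  have : IsFiniteMeasure ρ := isFiniteMeasure_withDensity_ofReal hw.2
  have hρν : ρ ≪ ν := withDensity_absolutelyContinuous ν _
  have hpos : ∀ᵐ s ∂ν, 0 < w s := hδw.mono fun s hs => hδ.trans_le hs
  set g := fun s => ∫ t, K (t, s) * y t ∂μ
  have hφ : MemLp (fun s => (w s)⁻¹ * g s) 2 ρ := by
    refine MemLp.of_bound ?_ (δ⁻¹ * (M * ∫ t, ‖y t‖ ∂μ)) (hρν.ae_le ?_)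
    · exact (hw.aemeasurable.inv.aestronglyMeasurable.mul
        (aestronglyMeasurable_integral_kernel_mul hKm hy.1)).mono_ac hρν
    · filter_upwards [hδw] with s hs
      rw [norm_mul, norm_inv, Real.norm_of_nonneg (hδ.le.trans hs)]
      exact mul_le_mul (inv_anti₀ hδ hs) (norm_integral_kernel_mul_le hK hy s) (norm_nonneg _)
        (inv_nonneg.2 hδ.le)
  have hφ_rep : ∀ ψ : Lp ℝ 2 ρ, ⟪hφ.toLp _, ψ⟫ = ∫ t, (∫ s, K (t, s) * ψ s ∂ν) * y t ∂μ := by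
    intro ψ
    have hψ : Integrable ψ ν := (((Lp.memLp ψ).integrable one_le_two).smul_measure
      ENNReal.ofReal_ne_top).mono_measure (le_smul_withDensity_ofReal hδ hδw)
    rw [integral_integral_kernel_mul_comm hKm hK hψ hy, L2.real_inner_toLp_left,
      ← integral_withDensity_ofReal_inv_mul hw.aemeasurable hpos]
    simp only [g, ρ, mul_assoc]
  exact ⟨hφ.toLp _, hφ_rep, fun φ' h' => ext_inner_right ℝ fun ψ => (h' ψ).trans (hφ_rep ψ).symm⟩

end KernelOperator

/-- Riesz representation for the Fredholm inverse problem: for every `y ∈ L²_μ(𝒯)` there is a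
unique `φ^y ∈ L²_ρ(𝒮)` with `⟨φ^y, ψ⟩_{L²_ρ} = ⟨L_K ψ, y⟩_{L²_μ}` for all `ψ`. -/
theorem exists_unique_riesz_representative
    (S T : Set ℝ) (hScomp : IsCompact S) (hTcomp : IsCompact T)
    (μ : Measure T) (ν : Measure S) [IsFiniteMeasure μ] [IsFiniteMeasure ν]
    (K : T × S → ℝ) (hK : Continuous K)
    (d : S → ℝ) (hd : ∀ s : S, d s = ∫ t : T, |K (t, s)| ∂μ)
    (hdpos : ∀ s : S, 0 < d s)
    (Z : ℝ) (hZ : Z = ∫ s : S, d s ∂ν)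
    (ρ : Measure S) (hρ : ρ = ν.withDensity fun s => ENNReal.ofReal (d s / Z)) :
    ∀ y : Lp ℝ 2 μ, ∃! φy : Lp ℝ 2 ρ,
      ∀ ψ : Lp ℝ 2 ρ, ⟪φy, ψ⟫ = ∫ t : T, (∫ s : S, K (t, s) * ψ s ∂ν) * y t ∂μ := by
  have : CompactSpace S := isCompact_iff_compactSpace.mp hScomp
  have : CompactSpace T := isCompact_iff_compactSpace.mp hTcomp
  obtain ⟨M, hM⟩ := isCompact_univ.exists_bound_of_continuousOn hK.continuousOn
  have hdc : Continuous d := by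
    have := continuous_parametric_integral_of_continuous (μ := μ)
      (f := fun s t => |K (t, s)|) (by fun_prop) isCompact_univ
    simpa only [Measure.restrict_univ, ← hd] using this
  obtain ⟨δ, hδ, hδd⟩ := isCompact_univ.exists_forall_le' hdc.continuousOn fun s _ => hdpos s
  have hdint : Integrable d ν := hdc.integrable_of_hasCompactSupport (.of_compactSpace d)
  obtain ⟨c, hc, hcd⟩ : ∃ c, 0 < c ∧ ∀ᵐ s ∂ν, c ≤ d s / Z := by
    -- for `ν = 0` the quotient `d s / Z` is the junk value `0`, but the bound is vacuous
    rcases eq_or_ne ν 0 with rfl | hν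
    · exact ⟨1, one_pos, by simp⟩
    have hZpos : 0 < Z := by
      rw [hZ, integral_pos_iff_support_of_nonneg (fun s => (hdpos s).le) hdint,
        Function.support_eq_univ fun s => (hdpos s).ne']
      exact Measure.measure_univ_pos.2 hν
    exact ⟨δ / Z, div_pos hδ hZpos,
      ae_of_all _ fun s => div_le_div_of_nonneg_right (hδd s trivial) hZpos.le⟩
  intro y
  rw [hρ]
  exact exists_unique_inner_eq_integral_kernel_mul hK.aestronglyMeasurable
    (fun p => hM p trivial) (hdint.div_const Z) hc hcd ((Lp.memLp y).integrable one_le_two)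
end

section
/- Let θ > 0, let s ∈ {0,1}, let k ∈ {2,3}, and let α ∈ ℝ be such that γ := (α − 1/θ)/(1 + s) satisfies 0 < γ < k. For i ≥ 1 set λ_i = i^{-θ}. Then lim_{λ→0⁺} (1+s) θ λ^{k−γ} ∑_{i=1}^∞ (λ_i^{1+s} + λ)^{-k} λ_i^{α} = Γ(γ) Γ(k − γ)/Γ(k); equivalently, ∑_{i=1}^∞ (i^{-(1+s)θ} + λ)^{-k} i^{-θα} = (1/((1+s)θ)) λ^{γ−k} ( Γ(γ)Γ(k−γ)/Γ(k) + o(1) ) as λ → 0⁺, where Γ is the Gamma function. -/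
/-!
With `β = (1 + s) θ` one has `θ α = β γ + 1`, and for `u = λ ^ (1 / β)` the `i`-th term of
`β λ ^ (k - γ) ∑ᵢ …` equals `u K(u i)` with `K(y) = β y ^ (β (k - γ) - 1) (1 + y ^ β) ^ (-k)`.
The series is thus a Riemann sum of mesh `u` for `∫₀^∞ K`, and it converges to that integral by
dominated convergence, since `K(y)` is at most a multiple of `y ^ (β (k - γ) - 1)` near `0` and of
`y ^ (-β γ - 1)` near `∞`, both integrable because `0 < γ < k`. The substitutions `y ^ β = x` and
`x = t / (1 - t)` turn `∫₀^∞ K` into the Beta integral `B(k - γ, γ) = Γ(γ) Γ(k - γ) / Γ(k)`.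
-/

open Filter MeasureTheory Set Topology

theorem integral_Ioo_rpow_mul_one_sub_rpow {a b : ℝ} (ha : 0 < a) (hb : 0 < b) :
    ∫ t in Ioo (0 : ℝ) 1, t ^ (a - 1) * (1 - t) ^ (b - 1) =
      Real.Gamma a * Real.Gamma b / Real.Gamma (a + b) := by
  have hbeta : Complex.betaIntegral a b =
      ((∫ t in (0 : ℝ)..1, t ^ (a - 1) * (1 - t) ^ (b - 1) : ℝ) : ℂ) := by
    rw [Complex.betaIntegral, ← intervalIntegral.integral_ofReal]
    refine intervalIntegral.integral_congr fun t ht => ?_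
    rw [uIcc_of_le zero_le_one] at ht
    push_cast
    rw [Complex.ofReal_cpow ht.1, Complex.ofReal_cpow (sub_nonneg.2 ht.2)]
    push_cast
    ring
  have hGamma := Complex.Gamma_mul_Gamma_eq_betaIntegral (s := a) (t := b)
    (by simpa using ha) (by simpa using hb)
  rw [hbeta, ← Complex.ofReal_add, Complex.Gamma_ofReal, Complex.Gamma_ofReal,
    Complex.Gamma_ofReal] at hGamma
  norm_cast at hGamma
  rw [intervalIntegral.integral_of_le zero_le_one, integral_Ioc_eq_integral_Ioo] at hGamma
  rw [hGamma, mul_div_cancel_left₀ _ (Real.Gamma_pos_of_pos (add_pos ha hb)).ne']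

theorem integral_Ioi_rpow_mul_one_add_rpow_neg {a b : ℝ} (ha : 0 < a) (hb : 0 < b) :
    ∫ y in Ioi (0 : ℝ), y ^ (a - 1) * (1 + y) ^ (-(a + b)) =
      Real.Gamma a * Real.Gamma b / Real.Gamma (a + b) := by
  have himage : (fun t : ℝ => t / (1 - t)) '' Ioo 0 1 = Ioi 0 := by
    refine Subset.antisymm ?_ fun y (hy : 0 < y) => ⟨y / (1 + y), ?_, ?_⟩
    · rintro _ ⟨t, ht, rfl⟩
      exact div_pos ht.1 (sub_pos.2 ht.2)
    · exact ⟨by positivity, (div_lt_one (by positivity)).2 (by linarith)⟩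
    · field_simp
      ring
  have hderiv : ∀ t ∈ Ioo (0 : ℝ) 1,
      HasDerivWithinAt (fun t : ℝ => t / (1 - t)) ((1 - t) ^ 2)⁻¹ (Ioo 0 1) t := by
    intro t ht
    have h : HasDerivAt (fun t : ℝ => t / (1 - t))
        ((1 * (1 - t) - t * (0 - 1)) / (1 - t) ^ 2) t :=
      (hasDerivAt_id t).div ((hasDerivAt_const t 1).sub (hasDerivAt_id t)) (sub_pos.2 ht.2).ne'
    exact h.hasDerivWithinAt.congr_deriv (by field_simp; ring)
  have hinj : InjOn (fun t : ℝ => t / (1 - t)) (Ioo 0 1) := by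
    intro t ht t' ht' h
    have h1t : 0 < 1 - t := sub_pos.2 ht.2
    have h1t' : 0 < 1 - t' := sub_pos.2 ht'.2
    field_simp at h
    linarith
  rw [← himage, integral_image_eq_integral_abs_deriv_smul measurableSet_Ioo hderiv hinj,
    ← integral_Ioo_rpow_mul_one_sub_rpow ha hb]
  refine setIntegral_congr_fun measurableSet_Ioo fun t ⟨ht0, ht1⟩ => ?_
  have h1t : 0 < 1 - t := sub_pos.2 ht1
  have hsplit : (1 - t) ^ (a + b) = (1 - t) ^ (a - 1) * (1 - t) ^ (b - 1) * (1 - t) ^ 2 := by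
    rw [← Real.rpow_add h1t, ← Real.rpow_natCast, ← Real.rpow_add h1t]
    norm_num
    ring_nf
  have hone : 1 + t / (1 - t) = (1 - t)⁻¹ := by field_simp; ring
  rw [smul_eq_mul, abs_of_pos (by positivity), hone, Real.inv_rpow h1t.le, Real.rpow_neg h1t.le,
    inv_inv, hsplit, Real.div_rpow ht0.le h1t.le]
  field_simp

section RiemannSum

variable {E : Type*} [NormedAddCommGroup E] [NormedSpace ℝ E] [CompleteSpace E]

lemma natCeil_eq_add_one_iff {x : ℝ} {n : ℕ} : ⌈x⌉₊ = n + 1 ↔ x ∈ Ioc (n : ℝ) (n + 1) := by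
  rw [Nat.ceil_eq_iff n.succ_ne_zero]
  simp

theorem integral_Ioi_comp_natCeil {T : ℕ → E}
    (hT : IntegrableOn (fun x : ℝ => T ⌈x⌉₊) (Ioi 0)) :
    ∫ x in Ioi (0 : ℝ), T ⌈x⌉₊ = ∑' n : ℕ, T (n + 1) := by
  have hunion : ⋃ n : ℕ, Ioc (n : ℝ) (n + 1) = Ioi 0 := by
    ext x
    simp only [mem_iUnion, ← natCeil_eq_add_one_iff, Nat.exists_eq_add_one, Nat.ceil_pos, mem_Ioi]
  have hdisj : Pairwise (Function.onFun Disjoint fun n : ℕ => Ioc (n : ℝ) (n + 1)) :=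
    fun m n hmn => disjoint_left.2 fun x hm hn => hmn <| by
      rw [← natCeil_eq_add_one_iff] at hm hn
      omega
  rw [← hunion] at hT ⊢
  rw [integral_iUnion (fun _ => measurableSet_Ioc) hdisj hT]
  refine tsum_congr fun n => ?_
  rw [setIntegral_congr_fun measurableSet_Ioc fun x hx => congrArg T (natCeil_eq_add_one_iff.2 hx),
    setIntegral_const]
  simp [Real.volume_real_Ioc]

lemma mul_natCeil_inv_mul_mem_Icc {u y : ℝ} (hu : 0 < u) (hy : 0 ≤ y) :
    u * ⌈u⁻¹ * y⌉₊ ∈ Icc y (y + u) := by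
  have hy' : y = u * (u⁻¹ * y) := by field_simp
  constructor
  · conv_lhs => rw [hy']
    exact mul_le_mul_of_nonneg_left (Nat.le_ceil _) hu.le
  · calc u * ⌈u⁻¹ * y⌉₊ ≤ u * (u⁻¹ * y + 1) :=
          mul_le_mul_of_nonneg_left (Nat.ceil_lt_add_one (by positivity)).le hu.le
      _ = y + u := by field_simp

theorem integral_Ioi_comp_mul_natCeil_inv_mul {g : ℝ → E} {u : ℝ} (hu : 0 < u)
    (hg : IntegrableOn (fun y => g (u * ⌈u⁻¹ * y⌉₊)) (Ioi 0)) :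
    ∫ y in Ioi (0 : ℝ), g (u * ⌈u⁻¹ * y⌉₊) = u • ∑' n : ℕ, g (u * (n + 1)) := by
  have hu' : 0 < u⁻¹ := inv_pos.2 hu
  rw [integrableOn_Ioi_comp_mul_left_iff (fun x => g (u * ⌈x⌉₊)) 0 hu', mul_zero] at hg
  rw [integral_comp_mul_left_Ioi (fun x => g (u * ⌈x⌉₊)) 0 hu', mul_zero, inv_inv,
    integral_Ioi_comp_natCeil (T := fun n : ℕ => g (u * n)) hg]
  push_cast
  rfl

theorem tendsto_smul_tsum_nhdsGT_zero_integral_Ioi {g : ℝ → E} {D : ℝ → ℝ}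
    (hg : ContinuousOn g (Ioi 0)) (hD : IntegrableOn D (Ioi 0))
    (hgD : ∀ y > 0, ∀ w ∈ Icc y (y + 1), ‖g w‖ ≤ D y) :
    Tendsto (fun u => u • ∑' n : ℕ, g (u * (n + 1))) (𝓝[>] 0) (𝓝 (∫ y in Ioi 0, g y)) := by
  set F : ℝ → ℝ → E := fun u y => g (u * ⌈u⁻¹ * y⌉₊)
  have hF_meas (u : ℝ) : AEStronglyMeasurable (F u) (volume.restrict (Ioi 0)) :=
    ((StronglyMeasurable.of_discrete (f := fun n : ℕ => g (u * n))).comp_measurable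
      (Nat.measurable_ceil.comp (measurable_const_mul _))).aestronglyMeasurable
  have hF_le : ∀ u ∈ Ioo (0 : ℝ) 1, ∀ y > 0, ‖F u y‖ ≤ D y := fun u hu y hy =>
    have h := mul_natCeil_inv_mul_mem_Icc hu.1 hy.le
    hgD y hy _ ⟨h.1, h.2.trans (by linarith [hu.2])⟩
  have hF_lim : ∀ y > 0, Tendsto (fun u => F u y) (𝓝[>] 0) (𝓝 (g y)) := by
    intro y hy
    refine (hg.continuousAt (Ioi_mem_nhds hy)).tendsto.comp ?_
    have hupper : Tendsto (fun u => y + u) (𝓝[>] 0) (𝓝 y) := by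
      simpa using (tendsto_const_nhds (x := y)).add (tendsto_nhdsWithin_of_tendsto_nhds
        (tendsto_id (x := 𝓝 (0 : ℝ))))
    refine tendsto_of_tendsto_of_tendsto_of_le_of_le' tendsto_const_nhds hupper ?_ ?_ <;>
      filter_upwards [self_mem_nhdsWithin] with u hu
    exacts [(mul_natCeil_inv_mul_mem_Icc hu hy.le).1, (mul_natCeil_inv_mul_mem_Icc hu hy.le).2]
  have hbound : ∀ᶠ u in 𝓝[>] (0 : ℝ), ∀ᵐ y ∂volume.restrict (Ioi 0), ‖F u y‖ ≤ D y := by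
    filter_upwards [Ioo_mem_nhdsGT one_pos] with u hu
    exact (ae_restrict_iff' measurableSet_Ioi).2 (ae_of_all _ (hF_le u hu))
  refine (tendsto_integral_filter_of_dominated_convergence D (.of_forall hF_meas) hbound hD
    ((ae_restrict_iff' measurableSet_Ioi).2 (ae_of_all _ hF_lim))).congr' ?_
  filter_upwards [hbound, self_mem_nhdsWithin] with u hu (hu0 : 0 < u)
  exact integral_Ioi_comp_mul_natCeil_inv_mul hu0 (hD.mono' (hF_meas u) hu)

end RiemannSum

noncomputable def rpowBetaPrimeKernel (β a b y : ℝ) : ℝ :=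
  β * y ^ (β * a - 1) * (1 + y ^ β) ^ (-(a + b))

section Kernel

variable {β a b : ℝ}

theorem integral_rpowBetaPrimeKernel (hβ : 0 < β) (ha : 0 < a) (hb : 0 < b) :
    ∫ y in Ioi (0 : ℝ), rpowBetaPrimeKernel β a b y =
      Real.Gamma a * Real.Gamma b / Real.Gamma (a + b) := by
  rw [← integral_Ioi_rpow_mul_one_add_rpow_neg ha hb,
    ← integral_comp_rpow_Ioi_of_pos hβ (g := fun y => y ^ (a - 1) * (1 + y) ^ (-(a + b)))]
  refine setIntegral_congr_fun measurableSet_Ioi fun y (hy : 0 < y) => ?_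
  have hpow : y ^ (β * a - 1) = y ^ (β - 1) * y ^ (β * (a - 1)) := by
    rw [← Real.rpow_add hy]
    ring_nf
  rw [smul_eq_mul, rpowBetaPrimeKernel, ← Real.rpow_mul hy.le, hpow]
  ring

lemma rpowBetaPrimeKernel_nonneg (hβ : 0 ≤ β) {y : ℝ} (hy : 0 ≤ y) :
    0 ≤ rpowBetaPrimeKernel β a b y := by
  unfold rpowBetaPrimeKernel
  positivity

lemma continuousOn_rpowBetaPrimeKernel : ContinuousOn (rpowBetaPrimeKernel β a b) (Ioi 0) := by
  intro y (hy : 0 < y)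
  unfold rpowBetaPrimeKernel
  fun_prop (disch := first | exact Or.inl hy.ne' | exact Or.inl (by positivity))

lemma rpowBetaPrimeKernel_le_mul_rpow (hβ : 0 ≤ β) (hab : 0 ≤ a + b) {w : ℝ} (hw : 0 < w) :
    rpowBetaPrimeKernel β a b w ≤ β * w ^ (β * a - 1) :=
  mul_le_of_le_one_right (by positivity)
    (Real.rpow_le_one_of_one_le_of_nonpos (le_add_of_nonneg_right (Real.rpow_nonneg hw.le β))
      (neg_nonpos.2 hab))

lemma rpowBetaPrimeKernel_le_mul_rpow_neg (hβ : 0 ≤ β) (hab : 0 ≤ a + b) {w : ℝ} (hw : 0 < w) :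
    rpowBetaPrimeKernel β a b w ≤ β * w ^ (-(β * b) - 1) := by
  calc rpowBetaPrimeKernel β a b w ≤ β * w ^ (β * a - 1) * (w ^ β) ^ (-(a + b)) := by
        unfold rpowBetaPrimeKernel
        exact mul_le_mul_of_nonneg_left (Real.rpow_le_rpow_of_nonpos (by positivity)
          (by linarith) (neg_nonpos.2 hab)) (by positivity)
    _ = β * w ^ (-(β * b) - 1) := by
        rw [← Real.rpow_mul hw.le, mul_assoc, ← Real.rpow_add hw]
        ring_nf

theorem exists_integrableOn_rpowBetaPrimeKernel_bound (hβ : 0 < β) (ha : 0 < a) (hb : 0 < b) :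
    ∃ D : ℝ → ℝ, IntegrableOn D (Ioi 0) ∧
      ∀ y > 0, ∀ w ∈ Icc y (y + 1), ‖rpowBetaPrimeKernel β a b w‖ ≤ D y := by
  set p := β * a - 1
  set q := -(β * b) - 1
  have hp : -1 < p := by simp only [p]; nlinarith [mul_pos hβ ha]
  have hq : q < -1 := by simp only [q]; nlinarith [mul_pos hβ hb]
  refine ⟨fun y => β * if y ≤ 1 then y ^ p + 2 ^ p else y ^ q, ?_, ?_⟩
  · have hsmall : IntegrableOn (fun y : ℝ => β * (y ^ p + 2 ^ p)) (Ioc 0 1) :=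
      (((intervalIntegral.intervalIntegrable_rpow' hp).1).add
        (integrableOn_const measure_Ioc_lt_top.ne)).const_mul β
    have hlarge : IntegrableOn (fun y : ℝ => β * y ^ q) (Ioi 1) :=
      (integrableOn_Ioi_rpow_of_lt hq one_pos).const_mul β
    rw [← Ioc_union_Ioi_eq_Ioi zero_le_one]
    refine (hsmall.congr_fun (fun y hy => ?_) measurableSet_Ioc).union
      (hlarge.congr_fun (fun y hy => ?_) measurableSet_Ioi)
    · simp [hy.2]
    · simp [not_le.2 (mem_Ioi.1 hy)]
  · intro y hy w ⟨hyw, hwy⟩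
    have hw : 0 < w := hy.trans_le hyw
    rw [Real.norm_of_nonneg (rpowBetaPrimeKernel_nonneg hβ.le hw.le)]
    dsimp only
    split_ifs with hy1
    · refine (rpowBetaPrimeKernel_le_mul_rpow hβ.le (by linarith) hw).trans
        (mul_le_mul_of_nonneg_left ?_ hβ.le)
      rcases le_total 0 p with hp | hp
      · linarith [Real.rpow_le_rpow hw.le (show w ≤ 2 by linarith) hp, Real.rpow_nonneg hy.le p]
      · linarith [Real.rpow_le_rpow_of_nonpos hy hyw hp, Real.rpow_nonneg zero_le_two p]
    · exact (rpowBetaPrimeKernel_le_mul_rpow_neg hβ.le (by linarith) hw).trans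
        (mul_le_mul_of_nonneg_left (Real.rpow_le_rpow_of_nonpos hy hyw
          (by linarith)) hβ.le)

lemma mul_rpowBetaPrimeKernel_mul {u x : ℝ} (hu : 0 < u) (hx : 0 < x) (k : ℕ) :
    u * rpowBetaPrimeKernel β (k - b) b (u * x) =
      β * (u ^ β) ^ ((k : ℝ) - b) * (x ^ (-(β * b + 1)) / (x ^ (-β) + u ^ β) ^ k) := by
  set A := 1 + (u * x) ^ β
  have hA : 0 < A := by positivity
  have hsum : x ^ (-β) + u ^ β = x ^ (-β) * A := by
    rw [mul_add, mul_one, Real.mul_rpow hu.le hx.le, mul_left_comm, ← Real.rpow_add hx]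
    simp [add_comm]
  have hpow : (x ^ (-β) * A) ^ k = x ^ (-(β * k)) * A ^ (k : ℝ) := by
    rw [mul_pow, ← Real.rpow_natCast, ← Real.rpow_natCast, ← Real.rpow_mul hx.le]
    ring_nf
  rw [rpowBetaPrimeKernel, hsum, hpow, sub_add_cancel, Real.rpow_neg hA.le,
    Real.mul_rpow hu.le hx.le, ← Real.rpow_mul hu.le, div_mul_eq_div_div, ← Real.rpow_sub hx]
  have hu' : u * u ^ (β * (k - b) - 1) = u ^ (β * (k - b)) := by
    rw [mul_comm, ← Real.rpow_add_one hu.ne']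
    ring_nf
  have hx' : x ^ (-(β * b + 1) - -(β * k)) = x ^ (β * (k - b) - 1) := by ring_nf
  rw [hx', ← hu']
  field_simp

end Kernel

lemma tendsto_rpow_nhdsGT_zero {p : ℝ} (hp : 0 < p) :
    Tendsto (fun x : ℝ => x ^ p) (𝓝[>] 0) (𝓝[>] 0) :=
  tendsto_nhdsWithin_iff.2
    ⟨by simpa [Real.zero_rpow hp.ne'] using
        (Real.continuousAt_rpow_const 0 p (.inr hp.le)).tendsto.mono_left nhdsWithin_le_nhds,
      eventually_nhdsWithin_of_forall fun _ hx => Real.rpow_pos_of_pos hx p⟩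

theorem power_spectrum_series_gamma_asymptotics_general
    (θ : ℝ) (hθ : 0 < θ) (s k : ℕ)
    (α γ : ℝ) (hγ : γ = (α - 1 / θ) / (1 + (s : ℝ)))
    (hγ_pos : 0 < γ) (hγ_lt : γ < (k : ℝ)) :
    Tendsto
      (fun l : ℝ => (1 + (s : ℝ)) * θ * l ^ ((k : ℝ) - γ) *
        ∑' i : ℕ, ((i : ℝ) + 1) ^ (-(θ * α)) /
          (((i : ℝ) + 1) ^ (-((1 + (s : ℝ)) * θ)) + l) ^ k)
      (nhdsWithin 0 (Set.Ioi 0))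
      (nhds (Real.Gamma γ * Real.Gamma ((k : ℝ) - γ) / Real.Gamma (k : ℝ))) := by
  set β := (1 + (s : ℝ)) * θ
  have hβ : 0 < β := by positivity
  have hθα : θ * α = β * γ + 1 := by
    rw [hγ]
    field_simp
    ring
  have hkγ : 0 < (k : ℝ) - γ := sub_pos.2 hγ_lt
  obtain ⟨D, hD, hKD⟩ := exists_integrableOn_rpowBetaPrimeKernel_bound hβ hkγ hγ_pos
  have hRiemann :=
    tendsto_smul_tsum_nhdsGT_zero_integral_Ioi continuousOn_rpowBetaPrimeKernel hD hKD
  rw [integral_rpowBetaPrimeKernel hβ hkγ hγ_pos, sub_add_cancel, mul_comm (Real.Gamma _)]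
    at hRiemann
  refine (hRiemann.comp (tendsto_rpow_nhdsGT_zero (inv_pos.2 hβ))).congr' ?_
  filter_upwards [self_mem_nhdsWithin] with l (hl : 0 < l)
  simp only [Function.comp_apply, smul_eq_mul, ← tsum_mul_left]
  refine tsum_congr fun i => ?_
  rw [mul_rpowBetaPrimeKernel_mul (by positivity) (by positivity), Real.rpow_inv_rpow hl.le hβ.ne',
    hθα]

/-- Gamma-function asymptotics of the series `F_s(λ, α, k) = ∑_{i≥1} (λᵢ^{1+s} + λ)^{-k} λᵢ^α`
for the polynomially decaying spectrum `λᵢ = i^{-θ}`: as `λ → 0⁺`,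
`(1+s) θ λ^{k−γ} F_s(λ, α, k) → Γ(γ)Γ(k−γ)/Γ(k)` where `γ = (α − 1/θ)/(1+s)`. -/
theorem power_spectrum_series_gamma_asymptotics
    (θ : ℝ) (hθ : 0 < θ) (s k : ℕ) (hs : s = 0 ∨ s = 1) (hk : k = 2 ∨ k = 3)
    (α γ : ℝ) (hγ : γ = (α - 1 / θ) / (1 + (s : ℝ)))
    (hγ_pos : 0 < γ) (hγ_lt : γ < (k : ℝ)) :
    Tendsto
      (fun l : ℝ => (1 + (s : ℝ)) * θ * l ^ ((k : ℝ) - γ) *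
        ∑' i : ℕ, ((i : ℝ) + 1) ^ (-(θ * α)) /
          (((i : ℝ) + 1) ^ (-((1 + (s : ℝ)) * θ)) + l) ^ k)
      (nhdsWithin 0 (Set.Ioi 0))
      (nhds (Real.Gamma γ * Real.Gamma ((k : ℝ) - γ) / Real.Gamma (k : ℝ))) :=
  power_spectrum_series_gamma_asymptotics_general θ hθ s k α γ hγ hγ_pos hγ_lt
end
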